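/- In a category with binary products, if m : Y₁ ⨯ Y₂ ⟶ Z₁ ⨯ Z₂ is a product morphism m = m₁₁ ⨯ m₂₂ and m has a retraction (is a split monomorphism), then m admits a retraction that is itself a product morphism, i.e., there exist h₁₁ : Z₁ ⟶ Y₁ and h₂₂ : Z₂ ⟶ Y₂ with (h₁₁ ⨯ h₂₂) ∘ m = id. -/

import Mathlib

/-!
For any `g : Z₁ ⟶ Y₂`, the map `⟨𝟙, g ≫ m₂⟩ : Z₁ ⟶ Z₁ ⨯ Z₂` satisfies
`m₁ ≫ ⟨𝟙, g ≫ m₂⟩ = ⟨𝟙, m₁ ≫ g⟩ ≫ (m₁ × m₂)`, so `⟨𝟙, g ≫ m₂⟩ ≫ h ≫ fst` is a retraction of `m₁`.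
Such a `g` exists once `Z₂` has a global element: push `⟨𝟙, const z₂⟩` through `h` and take the
second component. Symmetrically for `m₂`, and the product of the two retractions retracts `m₁ × m₂`.
-/

open CategoryTheory CategoryTheory.Limits

namespace CategoryTheory.Limits

variable {C : Type*} [Category C] [HasBinaryProducts C] {Y₁ Y₂ Z₁ Z₂ : C}
  {m₁ : Y₁ ⟶ Z₁} {m₂ : Y₂ ⟶ Z₂} {h : Z₁ ⨯ Z₂ ⟶ Y₁ ⨯ Y₂}

theorem prod_map_retraction_fst (hh : prod.map m₁ m₂ ≫ h = 𝟙 (Y₁ ⨯ Y₂)) (g : Z₁ ⟶ Y₂) :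
    m₁ ≫ prod.lift (𝟙 Z₁) (g ≫ m₂) ≫ h ≫ prod.fst = 𝟙 Y₁ := by
  have factor : m₁ ≫ prod.lift (𝟙 Z₁) (g ≫ m₂) = prod.lift (𝟙 Y₁) (m₁ ≫ g) ≫ prod.map m₁ m₂ := by
    ext <;> simp
  rw [reassoc_of% factor, reassoc_of% hh, prod.lift_fst]

theorem prod_map_retraction_snd (hh : prod.map m₁ m₂ ≫ h = 𝟙 (Y₁ ⨯ Y₂)) (g : Z₂ ⟶ Y₁) :
    m₂ ≫ prod.lift (g ≫ m₁) (𝟙 Z₂) ≫ h ≫ prod.snd = 𝟙 Y₂ := by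
  have factor : m₂ ≫ prod.lift (g ≫ m₁) (𝟙 Z₂) = prod.lift (m₂ ≫ g) (𝟙 Y₂) ≫ prod.map m₁ m₂ := by
    ext <;> simp
  rw [reassoc_of% factor, reassoc_of% hh, prod.lift_snd]

end CategoryTheory.Limits

theorem stmt_4 {C : Type*} [Category C] [HasBinaryProducts C] [HasTerminal C]
    {Y₁ Y₂ Z₁ Z₂ : C} (m₁₁ : Y₁ ⟶ Z₁) (m₂₂ : Y₂ ⟶ Z₂)
    (h : Z₁ ⨯ Z₂ ⟶ Y₁ ⨯ Y₂) (hh : prod.map m₁₁ m₂₂ ≫ h = 𝟙 (Y₁ ⨯ Y₂))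
    (z₁ : ⊤_ C ⟶ Z₁) (z₂ : ⊤_ C ⟶ Z₂) :
    ∃ (h₁₁ : Z₁ ⟶ Y₁) (h₂₂ : Z₂ ⟶ Y₂),
      prod.map m₁₁ m₂₂ ≫ prod.map h₁₁ h₂₂ = 𝟙 (Y₁ ⨯ Y₂) := by
  let g₁ : Z₁ ⟶ Y₂ := prod.lift (𝟙 Z₁) (terminal.from Z₁ ≫ z₂) ≫ h ≫ prod.snd
  let g₂ : Z₂ ⟶ Y₁ := prod.lift (terminal.from Z₂ ≫ z₁) (𝟙 Z₂) ≫ h ≫ prod.fst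
  refine ⟨prod.lift (𝟙 Z₁) (g₁ ≫ m₂₂) ≫ h ≫ prod.fst,
    prod.lift (g₂ ≫ m₁₁) (𝟙 Z₂) ≫ h ≫ prod.snd, ?_⟩
  rw [prod.map_map, prod_map_retraction_fst hh, prod_map_retraction_snd hh, prod.map_id_id]
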